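/- Let Ω be a bounded open subset of ℝ². There exists a constant C > 0, depending only on Ω, such that for all continuously differentiable vector fields u, v, w : ℝ² → ℝ² with compact support contained in Ω one has |B(u, v, w)| ≤ C·‖u‖_{L²}^{1/2}·‖∇u‖_{L²}^{1/2}·‖∇v‖_{L²}·‖∇w‖_{L²}. -/

import Mathlib

open MeasureTheory

/-- The convective term `((u·∇)v)·w` at a point `x`, where
`((u·∇)v)_i = ∑_j u_j ∂_j v_i`. -/
noncomputable def convTerm (u v w : (Fin 2 → ℝ) → (Fin 2 → ℝ)) (x : Fin 2 → ℝ) : ℝ :=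
  ∑ i, fderiv ℝ v x (u x) i * w x i

/-- The divergence `div u = ∑_j ∂_j u_j` at a point `x`. -/
noncomputable def divg (u : (Fin 2 → ℝ) → (Fin 2 → ℝ)) (x : Fin 2 → ℝ) : ℝ :=
  ∑ j, fderiv ℝ u x (Pi.single j 1) j

/-- The trilinear form
`B(u, v, w) = ∫ ((u·∇)v)·w dx + (1/2) ∫ (div u)(v·w) dx`. -/
noncomputable def Bform (u v w : (Fin 2 → ℝ) → (Fin 2 → ℝ)) : ℝ :=
  (∫ x, convTerm u v w x) + (1 / 2) * ∫ x, divg u x * (∑ i, v x i * w x i)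

/-- The `L²` norm `‖u‖_{L²} = (∫ |u(x)|² dx)^{1/2}`. -/
noncomputable def normL2 (u : (Fin 2 → ℝ) → (Fin 2 → ℝ)) : ℝ :=
  Real.sqrt (∫ x, ∑ i, (u x i) ^ 2)

/-- The `L²` norm of the gradient:
`‖∇u‖_{L²} = (∫ ∑_i ∑_j (∂_j u_i)² dx)^{1/2}`. -/
noncomputable def gradL2 (u : (Fin 2 → ℝ) → (Fin 2 → ℝ)) : ℝ :=
  Real.sqrt (∫ x, ∑ i, ∑ j, (fderiv ℝ u x (Pi.single j 1) i) ^ 2)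

/-!
Integrating by parts, `B(u, v, w) = (∫ ((u·∇)v)·w - ∫ ((u·∇)w)·v) / 2`, so it suffices to bound
one convective term. Cauchy–Schwarz, applied twice, gives
`(∫ ((u·∇)v)·w)⁴ ≤ ‖∇v‖⁴ ‖u‖_{L⁴}⁴ ‖w‖_{L⁴}⁴`. Ladyzhenskaya's inequality
`‖u‖_{L⁴}⁴ ≤ C ‖u‖² ‖∇u‖²` is the Gagliardo–Nirenberg–Sobolev inequality `‖f‖_{L²} ≤ K ‖∇f‖_{L¹}`
of the plane applied to `f = |u|²`, followed by Cauchy–Schwarz; the same Sobolev inequality and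
Cauchy–Schwarz on the bounded set `Ω` give the Poincaré inequality `‖w‖ ≤ C_Ω ‖∇w‖`. Together,
`‖w‖_{L⁴}⁴ ≤ C ‖∇w‖⁴`, and taking fourth roots gives the bound.
-/

open Set Module Bornology

theorem abs_le_of_pow_four_le {a b : ℝ} (hb : 0 ≤ b) (h : a ^ 4 ≤ b ^ 4) : |a| ≤ b :=
  (pow_le_pow_iff_left₀ (abs_nonneg a) hb four_ne_zero).1 (by rwa [Even.pow_abs ⟨2, rfl⟩])

theorem sqrt_pow_four {a : ℝ} (ha : 0 ≤ a) : √a ^ 4 = a ^ 2 := by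
  rw [show 4 = 2 * 2 from rfl, pow_mul, Real.sq_sqrt ha]

section CauchySchwarz

variable {α : Type*} [MeasurableSpace α] {μ : Measure α}

theorem sq_integral_le_of_sq_le_mul {h a b : α → ℝ} (ha : Integrable a μ) (hb : Integrable b μ)
    (ha0 : 0 ≤ a) (hb0 : 0 ≤ b) (hab : ∀ x, h x ^ 2 ≤ a x * b x) :
    (∫ x, h x ∂μ) ^ 2 ≤ (∫ x, a x ∂μ) * ∫ x, b x ∂μ := by
  have hsqrt {g : α → ℝ} (hg : Integrable g μ) (hg0 : 0 ≤ g) : MemLp (fun x => √(g x)) 2 μ := by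
    rw [memLp_two_iff_integrable_sq (Real.continuous_sqrt.comp_aestronglyMeasurable hg.1)]
    exact hg.congr (.of_forall fun x => (Real.sq_sqrt (hg0 x)).symm)
  by_cases hi : Integrable h μ
  swap
  · rw [integral_undef hi, sq, zero_mul]
    exact mul_nonneg (integral_nonneg ha0) (integral_nonneg hb0)
  have hbound : |∫ x, h x ∂μ| ≤ ∫ x, √(a x) * √(b x) ∂μ := by
    refine (abs_integral_le_integral_abs).trans (integral_mono hi.abs
      ((hsqrt ha ha0).integrable_mul (hsqrt hb hb0)) fun x => ?_)
    rw [← Real.sqrt_mul (ha0 x), ← Real.sqrt_sq_eq_abs]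
    exact Real.sqrt_le_sqrt (hab x)
  have holder := integral_mul_le_Lp_mul_Lq_of_nonneg Real.HolderConjugate.two_two
    (.of_forall fun x => Real.sqrt_nonneg (a x)) (.of_forall fun x => Real.sqrt_nonneg (b x))
    (by simpa using hsqrt ha ha0) (by simpa using hsqrt hb hb0)
  simp only [Real.rpow_two, Real.sq_sqrt (ha0 _), Real.sq_sqrt (hb0 _), ← Real.sqrt_eq_rpow]
    at holder
  calc (∫ x, h x ∂μ) ^ 2 = |∫ x, h x ∂μ| ^ 2 := (sq_abs _).symm
    _ ≤ (√(∫ x, a x ∂μ) * √(∫ x, b x ∂μ)) ^ 2 :=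
      pow_le_pow_left₀ (abs_nonneg _) (hbound.trans holder) 2
    _ = (∫ x, a x ∂μ) * ∫ x, b x ∂μ := by
      rw [mul_pow, Real.sq_sqrt (integral_nonneg ha0), Real.sq_sqrt (integral_nonneg hb0)]

end CauchySchwarz

theorem HasCompactSupport.integrable_comp {X Y : Type*} [TopologicalSpace X] [MeasurableSpace X]
    [OpensMeasurableSpace X] {μ : Measure X} [IsFiniteMeasureOnCompacts μ] [TopologicalSpace Y]
    [Zero Y] {u : X → Y} (hc : HasCompactSupport u) (hu : Continuous u) {Φ : Y → ℝ}
    (hΦ : Continuous Φ) (hΦ0 : Φ 0 = 0) : Integrable (fun x => Φ (u x)) μ :=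
  (hΦ.comp hu).integrable_of_hasCompactSupport (hc.comp_left hΦ0)

theorem HasCompactSupport.of_tsupport_subset_isBounded {X Y : Type*} [PseudoMetricSpace X]
    [ProperSpace X] [Zero Y] {f : X → Y} {s : Set X} (hs : IsBounded s) (hf : tsupport f ⊆ s) :
    HasCompactSupport f :=
  hs.isCompact_closure.of_isClosed_subset (isClosed_tsupport f) (hf.trans subset_closure)

theorem ContinuousLinearMap.opNorm_sq_le_of_norm_sq_le {E F : Type*} [NormedAddCommGroup E]
    [NormedSpace ℝ E] [NormedAddCommGroup F] [NormedSpace ℝ F] (T : E →L[ℝ] F) {C : ℝ}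
    (hC : 0 ≤ C) (h : ∀ y, ‖T y‖ ^ 2 ≤ C * ‖y‖ ^ 2) : ‖T‖ ^ 2 ≤ C := by
  have hT : ‖T‖ ≤ √C := T.opNorm_le_bound (Real.sqrt_nonneg C) fun y => by
    rw [← Real.sqrt_sq (norm_nonneg (T y)), ← Real.sqrt_sq (norm_nonneg y), ← Real.sqrt_mul hC]
    exact Real.sqrt_le_sqrt (h y)
  calc ‖T‖ ^ 2 ≤ √C ^ 2 := pow_le_pow_left₀ (norm_nonneg T) hT 2
    _ = C := Real.sq_sqrt hC

section Sobolev

variable {E : Type*} [NormedAddCommGroup E] [NormedSpace ℝ E] [MeasurableSpace E] [BorelSpace E]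
  [FiniteDimensional ℝ E] (μ : Measure E) [μ.IsAddHaarMeasure]
  {F : Type*} [NormedAddCommGroup F] [NormedSpace ℝ F]

theorem integral_norm_sq_le_sq_integral_norm_fderiv (hE : finrank ℝ E = 2) {f : E → F}
    (hf : ContDiff ℝ 1 f) (hc : HasCompactSupport f) :
    ∫ x, ‖f x‖ ^ 2 ∂μ ≤
      (eLpNormLESNormFDerivOneConst μ 2 : ℝ) ^ 2 * (∫ x, ‖fderiv ℝ f x‖ ∂μ) ^ 2 := by
  have hp : NNReal.HolderConjugate (finrank ℝ E) 2 := by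
    rw [hE]; exact_mod_cast NNReal.HolderConjugate.two_two
  have key := eLpNorm_le_eLpNorm_fderiv_one μ hf hc hp
  rw [(hf.continuous.memLp_of_hasCompactSupport hc).eLpNorm_eq_integral_rpow_norm (by simp)
      (by simp),
    ((hf.continuous_fderiv one_ne_zero).memLp_of_hasCompactSupport
      (hc.fderiv ℝ)).eLpNorm_eq_integral_rpow_norm one_ne_zero ENNReal.one_ne_top] at key
  simp only [ENNReal.coe_ofNat, ENNReal.toReal_ofNat, Real.rpow_ofNat, NNReal.coe_ofNat,
    ENNReal.toReal_one, Real.rpow_one, inv_one] at key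
  rw [← ENNReal.ofReal_coe_nnreal, ← ENNReal.ofReal_mul NNReal.zero_le_coe,
    ENNReal.ofReal_le_ofReal_iff (by positivity), inv_eq_one_div, ← Real.sqrt_eq_rpow,
    Real.sqrt_le_iff] at key
  rw [← mul_pow]
  exact key.2

theorem exists_integral_norm_sq_le_integral_norm_fderiv_sq (hE : finrank ℝ E = 2) {s : Set E}
    (hs : IsBounded s) :
    ∃ C ≥ 0, ∀ f : E → F, ContDiff ℝ 1 f → tsupport f ⊆ s →
      ∫ x, ‖f x‖ ^ 2 ∂μ ≤ C * ∫ x, ‖fderiv ℝ f x‖ ^ 2 ∂μ := by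
  let K : ℝ := (eLpNormLESNormFDerivOneConst μ 2 : ℝ)
  refine ⟨K ^ 2 * μ.real (closure s), by positivity, fun f hf hfs => ?_⟩
  have hc : HasCompactSupport f := .of_tsupport_subset_isBounded hs hfs
  have hDf_cont : Continuous fun x => ‖fderiv ℝ f x‖ ^ 2 :=
    (hf.continuous_fderiv one_ne_zero).norm.pow 2
  have hDf_supp : HasCompactSupport fun x => ‖fderiv ℝ f x‖ ^ 2 :=
    (hc.fderiv ℝ).norm.comp_left (g := fun t : ℝ => t ^ 2) (zero_pow two_ne_zero)
  have hcs : (∫ x, ‖fderiv ℝ f x‖ ∂μ) ^ 2 ≤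
      (∫ x, (closure s).indicator 1 x ∂μ) * ∫ x, ‖fderiv ℝ f x‖ ^ 2 ∂μ := by
    refine sq_integral_le_of_sq_le_mul ((integrable_indicator_iff isClosed_closure.measurableSet).2
      (integrableOn_const hs.closure.measure_lt_top.ne))
      (hDf_cont.integrable_of_hasCompactSupport hDf_supp) (indicator_nonneg (by simp))
      (fun x => by positivity) fun x => ?_
    by_cases hx : x ∈ closure s
    · simp [hx]
    · have : x ∉ tsupport (fderiv ℝ f) := fun h =>
        hx (subset_closure (hfs (tsupport_fderiv_subset ℝ h)))
      simp [image_eq_zero_of_notMem_tsupport this]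
  rw [integral_indicator_one isClosed_closure.measurableSet] at hcs
  calc ∫ x, ‖f x‖ ^ 2 ∂μ ≤ K ^ 2 * (∫ x, ‖fderiv ℝ f x‖ ∂μ) ^ 2 :=
        integral_norm_sq_le_sq_integral_norm_fderiv μ hE hf hc
    _ ≤ K ^ 2 * (μ.real (closure s) * ∫ x, ‖fderiv ℝ f x‖ ^ 2 ∂μ) := by gcongr
    _ = K ^ 2 * μ.real (closure s) * ∫ x, ‖fderiv ℝ f x‖ ^ 2 ∂μ := by ring

end Sobolev

section Coordinates

variable {m n : ℕ}

theorem ContinuousLinearMap.apply_eq_sum_smul_apply_single {M : Type*} [AddCommGroup M]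
    [Module ℝ M] [TopologicalSpace M] (T : (Fin n → ℝ) →L[ℝ] M) (y : Fin n → ℝ) :
    T y = ∑ j, y j • T (Pi.single j 1) := by
  conv_lhs => rw [← Finset.univ_sum_single y]
  rw [map_sum]
  congr! 1 with j
  rw [← map_smul, ← Pi.single_smul', smul_eq_mul, mul_one]

theorem sum_sq_le_card_mul_norm_sq (y : Fin n → ℝ) : ∑ j, y j ^ 2 ≤ n * ‖y‖ ^ 2 := by
  calc ∑ j, y j ^ 2 ≤ ∑ _j : Fin n, ‖y‖ ^ 2 := Finset.sum_le_sum fun j _ => by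
        rw [← sq_abs, ← Real.norm_eq_abs]
        exact pow_le_pow_left₀ (norm_nonneg _) (norm_le_pi_norm y j) 2
    _ = n * ‖y‖ ^ 2 := by simp

theorem norm_sq_le_sum_sq (y : Fin n → ℝ) : ‖y‖ ^ 2 ≤ ∑ j, y j ^ 2 := by
  have hy : ‖y‖ ≤ √(∑ j, y j ^ 2) := (pi_norm_le_iff_of_nonneg (Real.sqrt_nonneg _)).2 fun j => by
    rw [Real.norm_eq_abs, ← Real.sqrt_sq_eq_abs]
    exact Real.sqrt_le_sqrt (Finset.single_le_sum (fun j _ => sq_nonneg (y j)) (Finset.mem_univ j))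
  calc ‖y‖ ^ 2 ≤ √(∑ j, y j ^ 2) ^ 2 := pow_le_pow_left₀ (norm_nonneg y) hy 2
    _ = ∑ j, y j ^ 2 := Real.sq_sqrt (by positivity)

theorem sq_apply_le_sum_sq_mul (T : (Fin n → ℝ) →L[ℝ] ℝ) (y : Fin n → ℝ) :
    T y ^ 2 ≤ (∑ j, y j ^ 2) * ∑ j, T (Pi.single j 1) ^ 2 := by
  simp_rw [T.apply_eq_sum_smul_apply_single y, smul_eq_mul]
  exact Finset.sum_mul_sq_le_sq_mul_sq _ _ _

def frobeniusNormSq (T : (Fin n → ℝ) →L[ℝ] (Fin m → ℝ)) : ℝ :=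
  ∑ i, ∑ j, T (Pi.single j 1) i ^ 2

theorem frobeniusNormSq_nonneg (T : (Fin n → ℝ) →L[ℝ] (Fin m → ℝ)) : 0 ≤ frobeniusNormSq T := by
  unfold frobeniusNormSq; positivity

theorem continuous_frobeniusNormSq :
    Continuous (frobeniusNormSq : ((Fin n → ℝ) →L[ℝ] (Fin m → ℝ)) → ℝ) := by
  unfold frobeniusNormSq; fun_prop

theorem sum_sq_apply_le_frobeniusNormSq (T : (Fin n → ℝ) →L[ℝ] (Fin m → ℝ)) (y : Fin n → ℝ) :
    ∑ i, T y i ^ 2 ≤ (∑ j, y j ^ 2) * frobeniusNormSq T := by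
  rw [frobeniusNormSq, Finset.mul_sum]
  exact Finset.sum_le_sum fun i _ =>
    sq_apply_le_sum_sq_mul ((ContinuousLinearMap.proj i).comp T) y

theorem sq_sum_apply_mul_le (T : (Fin n → ℝ) →L[ℝ] (Fin m → ℝ)) (a : Fin n → ℝ)
    (c : Fin m → ℝ) :
    (∑ i, T a i * c i) ^ 2 ≤ frobeniusNormSq T * (∑ j, a j ^ 2) * ∑ i, c i ^ 2 := by
  calc (∑ i, T a i * c i) ^ 2 ≤ (∑ i, T a i ^ 2) * ∑ i, c i ^ 2 :=
        Finset.sum_mul_sq_le_sq_mul_sq _ _ _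
    _ ≤ (∑ j, a j ^ 2) * frobeniusNormSq T * ∑ i, c i ^ 2 := by
        gcongr; exact sum_sq_apply_le_frobeniusNormSq T a
    _ = _ := by ring

theorem norm_sq_le_card_mul_frobeniusNormSq (T : (Fin n → ℝ) →L[ℝ] (Fin m → ℝ)) :
    ‖T‖ ^ 2 ≤ n * frobeniusNormSq T := by
  refine T.opNorm_sq_le_of_norm_sq_le (by positivity [frobeniusNormSq_nonneg T]) fun y => ?_
  calc ‖T y‖ ^ 2 ≤ ∑ i, T y i ^ 2 := norm_sq_le_sum_sq (T y)
    _ ≤ (∑ j, y j ^ 2) * frobeniusNormSq T := sum_sq_apply_le_frobeniusNormSq T y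
    _ ≤ n * ‖y‖ ^ 2 * frobeniusNormSq T := by
        gcongr
        · exact frobeniusNormSq_nonneg T
        · exact sum_sq_le_card_mul_norm_sq y
    _ = n * frobeniusNormSq T * ‖y‖ ^ 2 := by ring

theorem hasFDerivAt_sum_sq {E : Type*} [NormedAddCommGroup E] [NormedSpace ℝ E]
    {u : E → (Fin m → ℝ)} {x : E} (hu : DifferentiableAt ℝ u x) :
    HasFDerivAt (fun x => ∑ i, u x i ^ 2)
      (∑ i, (2 * u x i) • (ContinuousLinearMap.proj i).comp (fderiv ℝ u x)) x := by
  refine HasFDerivAt.fun_sum fun i _ => ?_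
  simpa using (((hasFDerivAt_apply i (u x)).comp x hu.hasFDerivAt).pow 2)

theorem hasFDerivAt_sum_mul {E : Type*} [NormedAddCommGroup E] [NormedSpace ℝ E]
    {v w : E → (Fin m → ℝ)} {x : E} (hv : DifferentiableAt ℝ v x) (hw : DifferentiableAt ℝ w x) :
    HasFDerivAt (fun x => ∑ i, v x i * w x i)
      (∑ i, (v x i • (ContinuousLinearMap.proj i).comp (fderiv ℝ w x) +
        w x i • (ContinuousLinearMap.proj i).comp (fderiv ℝ v x))) x :=
  HasFDerivAt.fun_sum fun i _ =>
    (hasFDerivAt_pi'.1 hv.hasFDerivAt i).mul (hasFDerivAt_pi'.1 hw.hasFDerivAt i)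

theorem norm_fderiv_sum_sq_sq_le {u : (Fin n → ℝ) → (Fin m → ℝ)} {x : Fin n → ℝ}
    (hu : DifferentiableAt ℝ u x) :
    ‖fderiv ℝ (fun x => ∑ i, u x i ^ 2) x‖ ^ 2 ≤
      4 * n * (∑ i, u x i ^ 2) * frobeniusNormSq (fderiv ℝ u x) := by
  rw [(hasFDerivAt_sum_sq hu).fderiv]
  refine ContinuousLinearMap.opNorm_sq_le_of_norm_sq_le _
    (by positivity [frobeniusNormSq_nonneg (fderiv ℝ u x)]) fun y => ?_
  have hy : (∑ i, (2 * u x i) • (ContinuousLinearMap.proj i).comp (fderiv ℝ u x)) y =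
      2 * ∑ i, fderiv ℝ u x y i * u x i := by
    simp [Finset.mul_sum]
    exact Finset.sum_congr rfl fun i _ => by ring
  rw [hy, Real.norm_eq_abs, sq_abs]
  calc (2 * ∑ i, fderiv ℝ u x y i * u x i) ^ 2
      ≤ 4 * (frobeniusNormSq (fderiv ℝ u x) * (∑ j, y j ^ 2) * ∑ i, u x i ^ 2) := by
        rw [mul_pow, show (2 : ℝ) ^ 2 = 4 by norm_num]
        gcongr
        exact sq_sum_apply_mul_le _ _ _
    _ ≤ 4 * (frobeniusNormSq (fderiv ℝ u x) * (n * ‖y‖ ^ 2) * ∑ i, u x i ^ 2) := by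
        gcongr
        · exact frobeniusNormSq_nonneg _
        · exact sum_sq_le_card_mul_norm_sq y
    _ = 4 * n * (∑ i, u x i ^ 2) * frobeniusNormSq (fderiv ℝ u x) * ‖y‖ ^ 2 := by ring

theorem integral_fderiv_apply_eq_neg_integral_divergence_mul
    {f : (Fin n → ℝ) → (Fin n → ℝ)} {g : (Fin n → ℝ) → ℝ} (hf : ContDiff ℝ 1 f)
    (hc : HasCompactSupport f) (hg : ContDiff ℝ 1 g) :
    ∫ x, fderiv ℝ g x (f x) = -∫ x, (∑ j, fderiv ℝ f x (Pi.single j 1) j) * g x := by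
  have hf' (j : Fin n) : ContDiff ℝ 1 fun x => f x j := contDiff_pi.mp hf j
  have hcj (j : Fin n) : HasCompactSupport fun x => f x j :=
    hc.comp_left (g := fun y : Fin n → ℝ => y j) rfl
  have hDg := hg.continuous_fderiv one_ne_zero
  have hint₁ (j : Fin n) : Integrable fun x => f x j * fderiv ℝ g x (Pi.single j 1) :=
    Continuous.integrable_of_hasCompactSupport (by fun_prop) (hcj j).mul_right
  have hint₂ (j : Fin n) :
      Integrable fun x => fderiv ℝ (fun y => f y j) x (Pi.single j 1) * g x := by
    have hDfj := (hf' j).continuous_fderiv one_ne_zero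
    refine Continuous.integrable_of_hasCompactSupport (by fun_prop) (HasCompactSupport.mul_right ?_)
    exact ((hcj j).fderiv ℝ).comp_left
      (g := fun T : (Fin n → ℝ) →L[ℝ] ℝ => T (Pi.single j 1)) rfl
  have hibp (j : Fin n) : ∫ x, f x j * fderiv ℝ g x (Pi.single j 1) =
      -∫ x, fderiv ℝ (fun y => f y j) x (Pi.single j 1) * g x :=
    integral_mul_fderiv_eq_neg_fderiv_mul_of_integrable (hint₂ j) (hint₁ j)
      (Continuous.integrable_of_hasCompactSupport (by fun_prop) (hcj j).mul_right)
      (fun x _ => (hf' j).differentiable one_ne_zero x) fun x _ => hg.differentiable one_ne_zero x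
  have hdiv (x) : (∑ j, fderiv ℝ f x (Pi.single j 1) j) * g x =
      ∑ j, fderiv ℝ (fun y => f y j) x (Pi.single j 1) * g x := by
    rw [Finset.sum_mul]
    simp [fderiv_apply (hf.differentiable one_ne_zero x)]
  simp_rw [ContinuousLinearMap.apply_eq_sum_smul_apply_single _ (f _), smul_eq_mul, hdiv]
  rw [integral_finsetSum _ fun j _ => hint₁ j, integral_finsetSum _ fun j _ => hint₂ j,
    ← Finset.sum_neg_distrib]
  exact Finset.sum_congr rfl fun j _ => hibp j

end Coordinates

section Plane

variable {m : ℕ}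

theorem exists_integral_sq_sum_sq_le :
    ∃ C ≥ 0, ∀ u : (Fin 2 → ℝ) → (Fin m → ℝ), ContDiff ℝ 1 u → HasCompactSupport u →
      ∫ x, (∑ i, u x i ^ 2) ^ 2 ≤
        C * (∫ x, ∑ i, u x i ^ 2) * ∫ x, frobeniusNormSq (fderiv ℝ u x) := by
  let K : ℝ := eLpNormLESNormFDerivOneConst (volume : Measure (Fin 2 → ℝ)) 2
  refine ⟨8 * K ^ 2, by positivity, fun u hu hc => ?_⟩
  let g : (Fin 2 → ℝ) → ℝ := fun x => ∑ i, u x i ^ 2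
  have hg : ContDiff ℝ 1 g := ContDiff.sum fun i _ => (contDiff_pi.mp hu i).pow 2
  have hgc : HasCompactSupport g :=
    hc.comp_left (g := fun y : Fin m → ℝ => ∑ i, y i ^ 2) (by simp)
  have hsob := integral_norm_sq_le_sq_integral_norm_fderiv volume (by simp) hg hgc
  have hcs : (∫ x, ‖fderiv ℝ g x‖) ^ 2 ≤
      (∫ x, 8 * g x) * ∫ x, frobeniusNormSq (fderiv ℝ u x) := by
    refine sq_integral_le_of_sq_le_mul ?_ ?_ (fun x => by positivity)
      (fun x => frobeniusNormSq_nonneg _) fun x => ?_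
    · exact (hc.integrable_comp hu.continuous (Φ := fun y => ∑ i, y i ^ 2) (by fun_prop)
        (by simp)).const_mul 8
    · exact (hc.fderiv ℝ).integrable_comp (hu.continuous_fderiv one_ne_zero)
        continuous_frobeniusNormSq (by simp [frobeniusNormSq])
    · exact (norm_fderiv_sum_sq_sq_le (hu.differentiable one_ne_zero x)).trans_eq
        (by push_cast; ring)
  simp only [Real.norm_eq_abs, sq_abs] at hsob
  rw [integral_const_mul] at hcs
  calc ∫ x, (∑ i, u x i ^ 2) ^ 2 ≤ K ^ 2 * (∫ x, ‖fderiv ℝ g x‖) ^ 2 := hsob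
    _ ≤ K ^ 2 * (8 * (∫ x, g x) * ∫ x, frobeniusNormSq (fderiv ℝ u x)) := by gcongr
    _ = 8 * K ^ 2 * (∫ x, ∑ i, u x i ^ 2) * ∫ x, frobeniusNormSq (fderiv ℝ u x) := by ring

theorem exists_integral_sum_sq_le_integral_frobeniusNormSq {s : Set (Fin 2 → ℝ)}
    (hs : IsBounded s) :
    ∃ C ≥ 0, ∀ u : (Fin 2 → ℝ) → (Fin m → ℝ), ContDiff ℝ 1 u → tsupport u ⊆ s →
      ∫ x, ∑ i, u x i ^ 2 ≤ C * ∫ x, frobeniusNormSq (fderiv ℝ u x) := by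
  obtain ⟨C, hC0, hC⟩ := exists_integral_norm_sq_le_integral_norm_fderiv_sq
    (volume : Measure (Fin 2 → ℝ)) (F := Fin m → ℝ) (by simp) hs
  refine ⟨m * C * 2, by positivity, fun u hu hus => ?_⟩
  have hc : HasCompactSupport u := .of_tsupport_subset_isBounded hs hus
  have hDu := hu.continuous_fderiv one_ne_zero
  calc ∫ x, ∑ i, u x i ^ 2 ≤ ∫ x, m * ‖u x‖ ^ 2 :=
        integral_mono (hc.integrable_comp hu.continuous (Φ := fun y => ∑ i, y i ^ 2)
            (by fun_prop) (by simp))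
          ((hc.integrable_comp hu.continuous (Φ := fun y => ‖y‖ ^ 2) (by fun_prop)
            (by simp)).const_mul _)
          fun x => sum_sq_le_card_mul_norm_sq (u x)
    _ = m * ∫ x, ‖u x‖ ^ 2 := integral_const_mul _ _
    _ ≤ m * (C * ∫ x, 2 * frobeniusNormSq (fderiv ℝ u x)) := by
        gcongr
        refine (hC u hu hus).trans (mul_le_mul_of_nonneg_left (integral_mono ?_ ?_ fun x => ?_) hC0)
        · exact (hc.fderiv ℝ).integrable_comp hDu (Φ := fun T => ‖T‖ ^ 2) (by fun_prop) (by simp)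
        · exact ((hc.fderiv ℝ).integrable_comp hDu continuous_frobeniusNormSq
            (by simp [frobeniusNormSq])).const_mul 2
        · simpa using norm_sq_le_card_mul_frobeniusNormSq (fderiv ℝ u x)
    _ = m * C * 2 * ∫ x, frobeniusNormSq (fderiv ℝ u x) := by rw [integral_const_mul]; ring

end Plane

section TransportForm

variable {u v w : (Fin 2 → ℝ) → (Fin 2 → ℝ)}

theorem integrable_convTerm (hu : Continuous u) (hc : HasCompactSupport u) (hv : ContDiff ℝ 1 v)
    (hw : Continuous w) : Integrable (convTerm u v w) := by
  have hcont : Continuous (convTerm u v w) := by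
    have := hv.continuous_fderiv one_ne_zero
    unfold convTerm; fun_prop
  refine hcont.integrable_of_hasCompactSupport (hc.mono fun x hx hux => hx ?_)
  simp [convTerm, hux]

theorem integral_convTerm_add_integral_convTerm (hu : ContDiff ℝ 1 u) (hc : HasCompactSupport u)
    (hv : ContDiff ℝ 1 v) (hw : ContDiff ℝ 1 w) :
    (∫ x, convTerm u v w x) + ∫ x, convTerm u w v x = -∫ x, divg u x * ∑ i, v x i * w x i := by
  have hφ : ContDiff ℝ 1 fun x => ∑ i, v x i * w x i :=
    ContDiff.sum fun i _ => (contDiff_pi.mp hv i).mul (contDiff_pi.mp hw i)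
  have hconv (x) : convTerm u v w x + convTerm u w v x =
      fderiv ℝ (fun x => ∑ i, v x i * w x i) x (u x) := by
    rw [(hasFDerivAt_sum_mul (hv.differentiable one_ne_zero x)
      (hw.differentiable one_ne_zero x)).fderiv]
    simp [convTerm, Finset.sum_add_distrib, add_comm, mul_comm]
  rw [← integral_add (integrable_convTerm hu.continuous hc hv hw.continuous)
    (integrable_convTerm hu.continuous hc hw hv.continuous)]
  simp_rw [hconv]
  exact integral_fderiv_apply_eq_neg_integral_divergence_mul hu hc hφ

theorem sq_integral_convTerm_le (hu : Continuous u) (hcu : HasCompactSupport u)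
    (hv : ContDiff ℝ 1 v) (hcv : HasCompactSupport v) (hw : Continuous w) :
    (∫ x, convTerm u v w x) ^ 2 ≤
      (∫ x, frobeniusNormSq (fderiv ℝ v x)) * ∫ x, (∑ i, u x i ^ 2) * ∑ i, w x i ^ 2 := by
  refine sq_integral_le_of_sq_le_mul ?_ ?_ (fun x => frobeniusNormSq_nonneg _)
    (fun x => by positivity) fun x => ?_
  · exact (hcv.fderiv ℝ).integrable_comp (hv.continuous_fderiv one_ne_zero)
      continuous_frobeniusNormSq (by simp [frobeniusNormSq])
  · exact Continuous.integrable_of_hasCompactSupport (by fun_prop)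
      (hcu.comp_left (g := fun y : Fin 2 → ℝ => ∑ i, y i ^ 2) (by simp)).mul_right
  · rw [← mul_assoc]
    exact sq_sum_apply_mul_le (fderiv ℝ v x) (u x) (w x)

theorem pow_four_integral_convTerm_le (hu : Continuous u) (hcu : HasCompactSupport u)
    (hv : ContDiff ℝ 1 v) (hcv : HasCompactSupport v) (hw : Continuous w)
    (hcw : HasCompactSupport w) :
    (∫ x, convTerm u v w x) ^ 4 ≤ (∫ x, frobeniusNormSq (fderiv ℝ v x)) ^ 2 *
      (∫ x, (∑ i, u x i ^ 2) ^ 2) * ∫ x, (∑ i, w x i ^ 2) ^ 2 := by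
  have hCS : (∫ x, (∑ i, u x i ^ 2) * ∑ i, w x i ^ 2) ^ 2 ≤
      (∫ x, (∑ i, u x i ^ 2) ^ 2) * ∫ x, (∑ i, w x i ^ 2) ^ 2 :=
    sq_integral_le_of_sq_le_mul
      (hcu.integrable_comp hu (Φ := fun y => (∑ i, y i ^ 2) ^ 2) (by fun_prop) (by simp))
      (hcw.integrable_comp hw (Φ := fun y => (∑ i, y i ^ 2) ^ 2) (by fun_prop) (by simp))
      (fun x => by positivity) (fun x => by positivity) fun x => (mul_pow _ _ 2).le
  calc (∫ x, convTerm u v w x) ^ 4 = ((∫ x, convTerm u v w x) ^ 2) ^ 2 := by ring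
    _ ≤ ((∫ x, frobeniusNormSq (fderiv ℝ v x)) * ∫ x, (∑ i, u x i ^ 2) * ∑ i, w x i ^ 2) ^ 2 :=
        pow_le_pow_left₀ (sq_nonneg _) (sq_integral_convTerm_le hu hcu hv hcv hw) 2
    _ ≤ (∫ x, frobeniusNormSq (fderiv ℝ v x)) ^ 2 *
          ((∫ x, (∑ i, u x i ^ 2) ^ 2) * ∫ x, (∑ i, w x i ^ 2) ^ 2) := by
        rw [mul_pow]; gcongr
    _ = _ := by ring

theorem gradL2_eq_sqrt_integral_frobeniusNormSq (f : (Fin 2 → ℝ) → (Fin 2 → ℝ)) :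
    gradL2 f = √(∫ x, frobeniusNormSq (fderiv ℝ f x)) := rfl

theorem exists_abs_integral_convTerm_le {s : Set (Fin 2 → ℝ)} (hs : IsBounded s) :
    ∃ C > 0, ∀ u v w : (Fin 2 → ℝ) → (Fin 2 → ℝ),
      ContDiff ℝ 1 u → HasCompactSupport u → ContDiff ℝ 1 v → HasCompactSupport v →
      ContDiff ℝ 1 w → tsupport w ⊆ s →
      |∫ x, convTerm u v w x| ≤ C * √(normL2 u) * √(gradL2 u) * gradL2 v * gradL2 w := by
  obtain ⟨CL, hCL, hL⟩ := exists_integral_sq_sum_sq_le (m := 2)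
  obtain ⟨CP, hCP, hP⟩ := exists_integral_sum_sq_le_integral_frobeniusNormSq (m := 2) hs
  refine ⟨CL ^ 2 * CP + 1, by positivity, fun u v w hu hcu hv hcv hw hsw => ?_⟩
  have hcw : HasCompactSupport w := .of_tsupport_subset_isBounded hs hsw
  simp only [normL2, gradL2_eq_sqrt_integral_frobeniusNormSq]
  set N := ∫ x, ∑ i, u x i ^ 2
  set G : ((Fin 2 → ℝ) → (Fin 2 → ℝ)) → ℝ := fun f => ∫ x, frobeniusNormSq (fderiv ℝ f x)
  have hG (f) : 0 ≤ G f := integral_nonneg fun x => frobeniusNormSq_nonneg _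
  have hN : 0 ≤ N := integral_nonneg fun x => by positivity
  have hGu := hG u
  have hGv := hG v
  have hGw := hG w
  have hw4 : ∫ x, (∑ i, w x i ^ 2) ^ 2 ≤ CL * (CP * G w) * G w :=
    (hL w hw hcw).trans (by gcongr; exact hP w hw hsw)
  refine abs_le_of_pow_four_le (by positivity) ?_
  calc (∫ x, convTerm u v w x) ^ 4
      ≤ G v ^ 2 * (∫ x, (∑ i, u x i ^ 2) ^ 2) * ∫ x, (∑ i, w x i ^ 2) ^ 2 :=
        pow_four_integral_convTerm_le hu.continuous hcu hv hcv hw.continuous hcw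
    _ ≤ G v ^ 2 * (CL * N * G u) * (CL * (CP * G w) * G w) := by gcongr; exact hL u hu hcu
    _ = CL ^ 2 * CP * (N * G u * G v ^ 2 * G w ^ 2) := by ring
    _ ≤ (CL ^ 2 * CP + 1) ^ 4 * (N * G u * G v ^ 2 * G w ^ 2) := by
        gcongr
        exact (le_add_of_nonneg_right zero_le_one).trans
          (le_self_pow₀ (le_add_of_nonneg_left (by positivity)) four_ne_zero)
    _ = ((CL ^ 2 * CP + 1) * √(√N) * √(√(G u)) * √(G v) * √(G w)) ^ 4 := by
        rw [mul_pow, mul_pow, mul_pow, mul_pow, sqrt_pow_four (Real.sqrt_nonneg _),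
          sqrt_pow_four (Real.sqrt_nonneg _), sqrt_pow_four hGv, sqrt_pow_four hGw,
          Real.sq_sqrt hN, Real.sq_sqrt hGu]
        ring

end TransportForm

theorem Bform_ladyzhenskaya_bound_general
    (Ω : Set (Fin 2 → ℝ)) (hΩb : Bornology.IsBounded Ω) :
    ∃ C > 0, ∀ u v w : (Fin 2 → ℝ) → (Fin 2 → ℝ),
      ContDiff ℝ 1 u → HasCompactSupport u → tsupport u ⊆ Ω →
      ContDiff ℝ 1 v → HasCompactSupport v → tsupport v ⊆ Ω →
      ContDiff ℝ 1 w → HasCompactSupport w → tsupport w ⊆ Ω →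
      |Bform u v w| ≤
        C * Real.sqrt (normL2 u) * Real.sqrt (gradL2 u) * gradL2 v * gradL2 w := by
  obtain ⟨C, hC, hconv⟩ := exists_abs_integral_convTerm_le hΩb
  refine ⟨C, hC, fun u v w hu hcu _ hv hcv hsv hw hcw hsw => ?_⟩
  have hB : Bform u v w = ((∫ x, convTerm u v w x) - ∫ x, convTerm u w v x) / 2 := by
    have := integral_convTerm_add_integral_convTerm hu hcu hv hw
    rw [Bform]
    linarith
  have h₁ := hconv u v w hu hcu hv hcv hw hsw
  have h₂ := hconv u w v hu hcu hw hcw hv hsv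
  rw [mul_right_comm _ (gradL2 w)] at h₂
  rw [hB, abs_div, abs_two]
  linarith [abs_sub (∫ x, convTerm u v w x) (∫ x, convTerm u w v x)]

/-- Ladyzhenskaya-type continuity bound (2.16) for the velocity transport form:
`|B(u, v, w)| ≤ C ‖u‖_{L²}^{1/2} ‖∇u‖_{L²}^{1/2} ‖∇v‖_{L²} ‖∇w‖_{L²}`
with `C` depending only on `Ω`. -/
theorem Bform_ladyzhenskaya_bound
    (Ω : Set (Fin 2 → ℝ)) (hΩo : IsOpen Ω) (hΩb : Bornology.IsBounded Ω) :
    ∃ C > 0, ∀ u v w : (Fin 2 → ℝ) → (Fin 2 → ℝ),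
      ContDiff ℝ 1 u → HasCompactSupport u → tsupport u ⊆ Ω →
      ContDiff ℝ 1 v → HasCompactSupport v → tsupport v ⊆ Ω →
      ContDiff ℝ 1 w → HasCompactSupport w → tsupport w ⊆ Ω →
      |Bform u v w| ≤
        C * Real.sqrt (normL2 u) * Real.sqrt (gradL2 u) * gradL2 v * gradL2 w :=
  Bform_ladyzhenskaya_bound_general Ω hΩb
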